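/- Let F be a field of characteristic ≠ 3 containing a primitive cube root of unity ζ₃. With P_i, Q_i, R_i as defined (P_i(s) = ((s+ζ₃)^{3i} − (s+ζ₃²)^{3i})/(3(ζ₃−ζ₃²)s(s−1)), Q_i(s) = (((1−ζ₃)/3)(s+ζ₃)^{3i−1} + ((1−ζ₃²)/3)(s+ζ₃²)^{3i−1})/(s−1), R_i(s) = (−1)^i((2ζ₃+1)/3)((s+ζ₃²)^{3i−2} − (s+ζ₃)^{3i−2})), for all integers i, j, k: Q_i(1−s)·R_{j+k}(s) − Q_j(1−s)·R_{i+k}(s) = −3·(−1)^{i+j+k}·(s−1)²·(s²−s+1)^{3j−1}·P_{i−j}(s)·Q_k(s) in F(s). -/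

import Mathlib

/-!
Write `u = s + ζ₃` and `v = s + ζ₃²`. Since `1 + ζ₃ + ζ₃² = 0`, the substitution `s ↦ 1 - s`
sends `u, v` to `-v, -u`, and `uv = s² - s + 1`. After this substitution both sides are
Laurent polynomials in `u, v`, and the identity becomes the exchange relation
`(a vᵐ + b uᵐ)(vⁿ⁺ˡ - uⁿ⁺ˡ) - (a vⁿ + b uⁿ)(vᵐ⁺ˡ - uᵐ⁺ˡ) = (uv)ⁿ (uᵐ⁻ⁿ - vᵐ⁻ⁿ)(a uˡ + b vˡ)`.
-/

namespace IsPrimitiveRoot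

variable {K : Type*} [Field K] {ω : K}

lemma sq_add_self_add_one (hω : IsPrimitiveRoot ω 3) : ω ^ 2 + ω + 1 = 0 := by
  have := hω.geom_sum_eq_zero (by norm_num)
  simp only [Finset.sum_range_succ, Finset.sum_range_zero] at this
  linear_combination this

lemma self_sub_sq_sq (hω : IsPrimitiveRoot ω 3) : (ω - ω ^ 2) ^ 2 = -3 := by
  linear_combination (ω - 2) * hω.pow_eq_one + hω.sq_add_self_add_one

lemma self_sub_sq_ne_zero (hω : IsPrimitiveRoot ω 3) : ω - ω ^ 2 ≠ 0 := by
  rw [sub_ne_zero]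
  intro h
  have := hω.pow_inj (i := 1) (j := 2) (by norm_num) (by norm_num) (by simpa using h)
  omega

lemma three_ne_zero (hω : IsPrimitiveRoot ω 3) : (3 : K) ≠ 0 := by
  rw [← neg_ne_zero, ← hω.self_sub_sq_sq]
  exact pow_ne_zero 2 hω.self_sub_sq_ne_zero

lemma two_mul_add_one_div_three (hω : IsPrimitiveRoot ω 3) :
    (2 * ω + 1) / 3 = -(ω - ω ^ 2)⁻¹ := by
  have hc := hω.self_sub_sq_ne_zero
  rw [show 2 * ω + 1 = ω - ω ^ 2 by linear_combination hω.sq_add_self_add_one,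
    show (3 : K) = -(ω - ω ^ 2) ^ 2 by linear_combination hω.self_sub_sq_sq]
  field_simp

end IsPrimitiveRoot

lemma zpow_cross_difference {K : Type*} [Field K] {u v : K} (hu : u ≠ 0) (hv : v ≠ 0)
    (a b : K) (m n l : ℤ) :
    (a * v ^ m + b * u ^ m) * (v ^ (n + l) - u ^ (n + l)) -
        (a * v ^ n + b * u ^ n) * (v ^ (m + l) - u ^ (m + l)) =
      (u * v) ^ n * (u ^ (m - n) - v ^ (m - n)) * (a * u ^ l + b * v ^ l) := by
  simp only [zpow_add₀ hu, zpow_add₀ hv, zpow_sub₀ hu, zpow_sub₀ hv, mul_zpow]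
  field_simp
  ring

lemma neg_one_zpow_three_mul_sub_one {K : Type*} [Field K] (i : ℤ) :
    (-1 : K) ^ (3 * i - 1) = -(-1) ^ i := by
  rw [zpow_sub_one₀ (by norm_num), zpow_mul]
  norm_num

lemma neg_zpow_three_mul_sub_one {K : Type*} [Field K] (w : K) (i : ℤ) :
    (-w) ^ (3 * i - 1) = -(-1) ^ i * w ^ (3 * i - 1) := by
  rw [neg_eq_neg_one_mul w, mul_zpow, neg_one_zpow_three_mul_sub_one]

lemma RatFunc.X_add_C_ne_zero {F : Type*} [Field F] (c : F) :
    (RatFunc.X + RatFunc.C c : RatFunc F) ≠ 0 := by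
  simpa [RatFunc.algebraMap_X, RatFunc.algebraMap_C] using
    RatFunc.algebraMap_ne_zero (Polynomial.X_add_C_ne_zero c)

namespace ZetaThree

variable {K : Type*} [Field K]

def P (ω x : K) (i : ℤ) : K :=
  ((x + ω) ^ (3 * i) - (x + ω ^ 2) ^ (3 * i)) / (3 * (ω - ω ^ 2) * x * (x - 1))

def Q (ω x : K) (i : ℤ) : K :=
  ((1 - ω) / 3 * (x + ω) ^ (3 * i - 1) + (1 - ω ^ 2) / 3 * (x + ω ^ 2) ^ (3 * i - 1)) / (x - 1)

def R (ω x : K) (i : ℤ) : K :=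
  (-1) ^ i * ((2 * ω + 1) / 3) * ((x + ω ^ 2) ^ (3 * i - 2) - (x + ω) ^ (3 * i - 2))

variable {ω : K}

lemma Q_one_sub (hω : IsPrimitiveRoot ω 3) (x : K) (i : ℤ) :
    Q ω (1 - x) i = (-1) ^ i *
      ((1 - ω) / 3 * (x + ω ^ 2) ^ (3 * i - 1) + (1 - ω ^ 2) / 3 * (x + ω) ^ (3 * i - 1)) / x := by
  have h := hω.sq_add_self_add_one
  rw [Q, show 1 - x + ω = -(x + ω ^ 2) by linear_combination h,
    show 1 - x + ω ^ 2 = -(x + ω) by linear_combination h,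
    neg_zpow_three_mul_sub_one, neg_zpow_three_mul_sub_one]
  ring

theorem Q_one_sub_mul_R_sub (hω : IsPrimitiveRoot ω 3) {x : K} (hx : x ≠ 0) (hx1 : x - 1 ≠ 0)
    (hu : x + ω ≠ 0) (hv : x + ω ^ 2 ≠ 0) (i j k : ℤ) :
    Q ω (1 - x) i * R ω x (j + k) - Q ω (1 - x) j * R ω x (i + k) =
      -3 * (-1) ^ (i + j + k) * (x - 1) ^ 2 * (x ^ 2 - x + 1) ^ (3 * j - 1) *
        P ω x (i - j) * Q ω x k := by
  have hsign (m n : ℤ) : (-1 : K) ^ (m + n) = (-1) ^ m * (-1) ^ n := zpow_add₀ (by norm_num) m n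
  have hcore := zpow_cross_difference hu hv ((1 - ω) / 3) ((1 - ω ^ 2) / 3)
    (3 * i - 1) (3 * j - 1) (3 * k - 1)
  rw [show 3 * j - 1 + (3 * k - 1) = 3 * (j + k) - 2 by ring,
    show 3 * i - 1 + (3 * k - 1) = 3 * (i + k) - 2 by ring,
    show 3 * i - 1 - (3 * j - 1) = 3 * (i - j) by ring] at hcore
  have hnorm : x ^ 2 - x + 1 = (x + ω) * (x + ω ^ 2) := by
    linear_combination (-x) * hω.sq_add_self_add_one - hω.pow_eq_one
  have h3 := hω.three_ne_zero
  have hc := hω.self_sub_sq_ne_zero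
  rw [Q_one_sub hω, Q_one_sub hω, R, R, P, Q, hnorm, hω.two_mul_add_one_div_three,
    hsign, hsign, hsign, hsign]
  set u := x + ω
  set v := x + ω ^ 2
  set a := (1 - ω) / 3
  set b := (1 - ω ^ 2) / 3
  calc _ = (-1) ^ i * (-1) ^ j * (-1) ^ k * -(ω - ω ^ 2)⁻¹ / x *
        ((a * v ^ (3 * i - 1) + b * u ^ (3 * i - 1)) *
            (v ^ (3 * (j + k) - 2) - u ^ (3 * (j + k) - 2)) -
          (a * v ^ (3 * j - 1) + b * u ^ (3 * j - 1)) *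
            (v ^ (3 * (i + k) - 2) - u ^ (3 * (i + k) - 2))) := by
        ring
    _ = _ := by
      rw [hcore]
      field_simp

end ZetaThree

theorem stmt17_general (F : Type*) [Field F]
    (ζ : F) (hζ : IsPrimitiveRoot ζ 3)
    (P Q Qm R : ℤ → RatFunc F)
    (hP : ∀ i : ℤ, P i =
      ((RatFunc.X + RatFunc.C ζ) ^ (3 * i) - (RatFunc.X + RatFunc.C (ζ ^ 2)) ^ (3 * i)) /
        (3 * (RatFunc.C ζ - RatFunc.C (ζ ^ 2)) * RatFunc.X * (RatFunc.X - 1)))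
    (hQ : ∀ i : ℤ, Q i =
      (RatFunc.C ((1 - ζ) / 3) * (RatFunc.X + RatFunc.C ζ) ^ (3 * i - 1) +
        RatFunc.C ((1 - ζ ^ 2) / 3) * (RatFunc.X + RatFunc.C (ζ ^ 2)) ^ (3 * i - 1)) /
        (RatFunc.X - 1))
    (hQm : ∀ i : ℤ, Qm i =
      (RatFunc.C ((1 - ζ) / 3) * ((1 - RatFunc.X) + RatFunc.C ζ) ^ (3 * i - 1) +
        RatFunc.C ((1 - ζ ^ 2) / 3) * ((1 - RatFunc.X) + RatFunc.C (ζ ^ 2)) ^ (3 * i - 1)) /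
        ((1 - RatFunc.X) - 1))
    (hR : ∀ i : ℤ, R i =
      (-1 : RatFunc F) ^ i * RatFunc.C ((2 * ζ + 1) / 3) *
        ((RatFunc.X + RatFunc.C (ζ ^ 2)) ^ (3 * i - 2) - (RatFunc.X + RatFunc.C ζ) ^ (3 * i - 2)))
    (i j k : ℤ) :
    Qm i * R (j + k) - Qm j * R (i + k) =
      -3 * (-1 : RatFunc F) ^ (i + j + k) * (RatFunc.X - 1) ^ 2 *
        (RatFunc.X ^ 2 - RatFunc.X + 1) ^ (3 * j - 1) * P (i - j) * Q k := by
  set ω : RatFunc F := RatFunc.C ζ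
  have hω : IsPrimitiveRoot ω 3 := hζ.map_of_injective (RatFunc.C (K := F)).injective
  have hC2 : RatFunc.C (ζ ^ 2) = ω ^ 2 := map_pow _ _ _
  have hP' : P = ZetaThree.P ω RatFunc.X := funext fun i => by rw [hP, hC2, ZetaThree.P]
  have hQ' : Q = ZetaThree.Q ω RatFunc.X := funext fun i => by
    simp only [hQ, ZetaThree.Q, map_div₀, map_sub, map_one, map_ofNat, hC2, ω]
  have hQm' : Qm = ZetaThree.Q ω (1 - RatFunc.X) := funext fun i => by
    simp only [hQm, ZetaThree.Q, map_div₀, map_sub, map_one, map_ofNat, hC2, ω]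
  have hR' : R = ZetaThree.R ω RatFunc.X := funext fun i => by
    simp only [hR, ZetaThree.R, map_div₀, map_add, map_mul, map_one, map_ofNat, hC2, ω]
  have hX1 : (RatFunc.X - 1 : RatFunc F) ≠ 0 := by
    simpa [sub_eq_add_neg] using RatFunc.X_add_C_ne_zero (-1 : F)
  rw [hP', hQ', hQm', hR']
  exact ZetaThree.Q_one_sub_mul_R_sub hω RatFunc.X_ne_zero hX1 (RatFunc.X_add_C_ne_zero ζ)
    (hC2 ▸ RatFunc.X_add_C_ne_zero (ζ ^ 2)) i j k

theorem stmt17 (F : Type*) [Field F] (h3 : ringChar F ≠ 3)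
    (ζ : F) (hζ : IsPrimitiveRoot ζ 3)
    (P Q Qm R : ℤ → RatFunc F)
    (hP : ∀ i : ℤ, P i =
      ((RatFunc.X + RatFunc.C ζ) ^ (3 * i) - (RatFunc.X + RatFunc.C (ζ ^ 2)) ^ (3 * i)) /
        (3 * (RatFunc.C ζ - RatFunc.C (ζ ^ 2)) * RatFunc.X * (RatFunc.X - 1)))
    (hQ : ∀ i : ℤ, Q i =
      (RatFunc.C ((1 - ζ) / 3) * (RatFunc.X + RatFunc.C ζ) ^ (3 * i - 1) +
        RatFunc.C ((1 - ζ ^ 2) / 3) * (RatFunc.X + RatFunc.C (ζ ^ 2)) ^ (3 * i - 1)) /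
        (RatFunc.X - 1))
    (hQm : ∀ i : ℤ, Qm i =
      (RatFunc.C ((1 - ζ) / 3) * ((1 - RatFunc.X) + RatFunc.C ζ) ^ (3 * i - 1) +
        RatFunc.C ((1 - ζ ^ 2) / 3) * ((1 - RatFunc.X) + RatFunc.C (ζ ^ 2)) ^ (3 * i - 1)) /
        ((1 - RatFunc.X) - 1))
    (hR : ∀ i : ℤ, R i =
      (-1 : RatFunc F) ^ i * RatFunc.C ((2 * ζ + 1) / 3) *
        ((RatFunc.X + RatFunc.C (ζ ^ 2)) ^ (3 * i - 2) - (RatFunc.X + RatFunc.C ζ) ^ (3 * i - 2)))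
    (i j k : ℤ) :
    Qm i * R (j + k) - Qm j * R (i + k) =
      -3 * (-1 : RatFunc F) ^ (i + j + k) * (RatFunc.X - 1) ^ 2 *
        (RatFunc.X ^ 2 - RatFunc.X + 1) ^ (3 * j - 1) * P (i - j) * Q k :=
  stmt17_general F ζ hζ P Q Qm R hP hQ hQm hR i j k
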